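/- Let N be a binary normal network on X with reticulated cherry {a,b} (reticulation leaf b), and let g_b be the grandparent of b that is not the parent of a. Then for all c in the visibility set V_{g_b} of g_b and all x in X - (V_{g_b} ∪ {b}), the rooted triple bc|x is displayed by N and the rooted triple ac|b is not displayed by N. -/

import Mathlib

/-- A (candidate) rooted phylogenetic network structure: a directed graph on a
vertex type `V` with a distinguished root and a labelling of (intended) leaves
by elements of `X`.  The combinatorial axioms are imposed by predicates below. -/
structure Network (X : Type) where
  V : Type
  arc : V → V → Prop
  root : V
  leaf : X → V

namespace Network

variable {X : Type} (N : Network X)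

def parents (v : N.V) : Set N.V := {u | N.arc u v}

def children (u : N.V) : Set N.V := {v | N.arc u v}

/-- in-degree 1, out-degree 2 -/
def IsTreeVertex (v : N.V) : Prop := (N.parents v).ncard = 1 ∧ (N.children v).ncard = 2

/-- in-degree 2, out-degree 1 -/
def IsRetic (v : N.V) : Prop := (N.parents v).ncard = 2 ∧ (N.children v).ncard = 1

/-- in-degree 1, out-degree 0 -/
def IsLeafVertex (v : N.V) : Prop := (N.parents v).ncard = 1 ∧ (N.children v).ncard = 0

def Acyclic : Prop := ∀ v : N.V, ¬ Relation.TransGen N.arc v v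

/-- A well-formed binary phylogenetic network (non-degenerate case): a finite
acyclic digraph with a root of in-degree 0 and out-degree 2, leaves of
in-degree 1 and out-degree 0 bijectively labelled by `X`, and all remaining
vertices tree vertices or reticulations. -/
def Wf : Prop :=
  Finite N.V ∧ N.Acyclic ∧
  (N.parents N.root).ncard = 0 ∧ (N.children N.root).ncard = 2 ∧
  Function.Injective N.leaf ∧
  (∀ x : X, N.IsLeafVertex (N.leaf x)) ∧
  (∀ v : N.V, v = N.root ∨ (∃ x, N.leaf x = v) ∨ N.IsTreeVertex v ∨ N.IsRetic v)

/-- The degenerate network on a single leaf: one vertex, no arcs. -/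
def Degenerate : Prop :=
  (∀ v : N.V, v = N.root) ∧ (∀ u v : N.V, ¬ N.arc u v) ∧
  (∃! _x : X, True) ∧ (∀ x : X, N.leaf x = N.root)

def IsBinaryPhylo : Prop := N.Wf ∨ N.Degenerate

/-- `l` is a directed path (a list of successively adjacent vertices) from `u` to `v`. -/
def IsPathFromTo (l : List N.V) (u v : N.V) : Prop :=
  l.Chain' N.arc ∧ l.head? = some u ∧ l.getLast? = some v

/-- `v` is a descendant of `u` (equivalently, `u` is an ancestor of `v`). -/
def Desc (u v : N.V) : Prop := Relation.ReflTransGen N.arc u v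

/-- The visibility set of `u`: those leaf labels `x` such that every directed
path from the root to the leaf labelled `x` traverses `u`. -/
def visSet (u : N.V) : Set X :=
  {x | ∀ l : List N.V, N.IsPathFromTo l N.root (N.leaf x) → u ∈ l}

/-- The cluster set of `u`: leaf labels of leaves that are descendants of `u`. -/
def cluster (u : N.V) : Set X := {x | N.Desc u (N.leaf x)}

/-- A tree path from `u` to `t`: a directed path whose vertices other than the
endpoints are tree vertices. -/
def IsTreePath (l : List N.V) (u t : N.V) : Prop :=
  N.IsPathFromTo l u t ∧ ∀ v ∈ l, v ≠ u → v ≠ t → N.IsTreeVertex v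

/-- Tree-child: every vertex with a child has a child that is a tree vertex or a leaf. -/
def TreeChild : Prop :=
  ∀ v : N.V, (∃ c, N.arc v c) → ∃ c, N.arc v c ∧ (N.IsTreeVertex c ∨ N.IsLeafVertex c)

/-- Some reticulation arc `(u,v)` is a shortcut: there is a directed path from
`u` to `v` avoiding the arc `(u,v)`. -/
def HasShortcut : Prop :=
  ∃ u v, N.arc u v ∧ N.IsRetic v ∧ ∃ w, N.arc u w ∧ w ≠ v ∧ N.Desc w v

/-- Normal: tree-child with no shortcuts. -/
def IsNormal : Prop := N.TreeChild ∧ ¬ N.HasShortcut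

def SiblingRetics (u v : N.V) : Prop :=
  u ≠ v ∧ N.IsRetic u ∧ N.IsRetic v ∧ ∃ p, N.arc p u ∧ N.arc p v

def StackRetics (u v : N.V) : Prop :=
  N.IsRetic u ∧ N.IsRetic v ∧ N.arc u v

/-- `u` and `v` are near-sibling reticulations: some tree vertex `t` has as its
two children `v` and a tree vertex `s` that is a parent of `u`. -/
def NearSiblingRetics (u v : N.V) : Prop :=
  u ≠ v ∧ N.IsRetic u ∧ N.IsRetic v ∧
  ∃ t s, N.IsTreeVertex t ∧ N.IsTreeVertex s ∧ N.arc t s ∧ N.arc t v ∧ N.arc s u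

/-- `u` and `v` are near-stack reticulations: the child of `u` is a tree vertex
that is a parent of `v`. -/
def NearStackRetics (u v : N.V) : Prop :=
  N.IsRetic u ∧ N.IsRetic v ∧ ∃ s, N.arc u s ∧ N.IsTreeVertex s ∧ N.arc s v

def NoNearRetics : Prop :=
  (∀ u v, ¬ N.NearSiblingRetics u v) ∧ (∀ u v, ¬ N.NearStackRetics u v)

/-- `{a,b}` is a cherry: the leaves labelled `a` and `b` share a parent. -/
def Cherry (a b : X) : Prop :=
  a ≠ b ∧ ∃ p, N.arc p (N.leaf a) ∧ N.arc p (N.leaf b)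

/-- `{a,b}` is a reticulated cherry with reticulation leaf `b`. -/
def ReticCherry (a b : X) : Prop :=
  a ≠ b ∧ ∃ pa pb, N.arc pa (N.leaf a) ∧ N.arc pb (N.leaf b) ∧
    N.IsRetic pb ∧ N.arc pa pb

/-- `N` displays the rooted triple `xy|z`: there is a subdigraph of `N` that
is a subdivision of the rooted triple tree with `z` adjacent to the root,
i.e. vertices `p` (the root image) and `q` (the image of the parent of `x,y`)
together with internally disjoint directed paths as below. -/
def Displays (x y z : X) : Prop :=
  x ≠ y ∧ x ≠ z ∧ y ≠ z ∧
  ∃ (p q : N.V) (l0 lx ly lz : List N.V),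
    p ≠ q ∧
    N.IsPathFromTo l0 p q ∧
    N.IsPathFromTo lx q (N.leaf x) ∧
    N.IsPathFromTo ly q (N.leaf y) ∧
    N.IsPathFromTo lz p (N.leaf z) ∧
    (∀ v ∈ lx, v ∈ ly → v = q) ∧
    (∀ v ∈ l0, v ∈ lx ∨ v ∈ ly → v = q) ∧
    (∀ v ∈ lz, v ∈ l0 ∨ v ∈ lx ∨ v ∈ ly → v = p)

/-- `R(N)`: the set of rooted triples displayed by `N`, encoded as ordered
triples `(x, y, z)` standing for `xy|z`. -/
def RDisp : Set (X × X × X) := {t | N.Displays t.1 t.2.1 t.2.2}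

/-- Isomorphism of networks on the same leaf set: a digraph isomorphism fixing
each leaf label. -/
def Isomorphic (N1 N2 : Network X) : Prop :=
  ∃ φ : N1.V ≃ N2.V,
    (∀ u v, N1.arc u v ↔ N2.arc (φ u) (φ v)) ∧ (∀ x, φ (N1.leaf x) = N2.leaf x)

/-- A candidate set for `b` (relative to `a`): a non-empty subset
`W ⊆ X - {a,b}` satisfying conditions (W1)–(W5). -/
def CandidateSet (a b : X) (W : Set X) : Prop :=
  W.Nonempty ∧ a ∉ W ∧ b ∉ W ∧
  -- (W1)
  (∀ c ∈ W, ∀ x : X, x ∉ W → x ≠ b →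
    N.Displays b c x ∧ ¬ N.Displays a c b) ∧
  -- (W2)
  (∀ c ∈ W, ∀ c' ∈ W, c ≠ c' → ¬ N.Displays b c c') ∧
  -- (W3)
  (∀ c ∈ W, ∀ x : X, x ∉ W → x ≠ a → x ≠ b →
    (N.Displays c x a ↔ N.Displays b x a)) ∧
  -- (W4)
  (∀ x y : X, x ∉ W → x ≠ a → x ≠ b → y ∉ W → y ≠ a → y ≠ b →
    N.Displays b x y → ¬ N.Displays a x y → ∀ c ∈ W, N.Displays c x y) ∧
  -- (W5)
  (∀ c ∈ W, (∀ x : X, x ∉ W → x ≠ a → x ≠ b → N.Displays a c x) →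
    ∀ x : X, x ∉ W → x ≠ a → x ≠ b → ¬ N.Displays a x c ∧ ¬ N.Displays a x b)

end Network

/-!
Let `L` be a root-to-`x` path avoiding `g_b` and `p` its last vertex that is an ancestor of
`g_b`. The paths `p ⇝ g_b`, `g_b → p_b → b`, `g_b ⇝ c` and the tail of `L` from `p` embed
`bc|x`: they are internally disjoint because neither `c` nor `x` lies below `p_b`, and a vertex
shared by the paths to `x` and to `c` would give a root-to-`c` path avoiding `g_b`.

Conversely, in an embedding of `ac|b` with root `p` and fork `q`, the path from `q` to `a`
passes through `p_a`, and the path from `p` to `b` enters `p_b` from `p_a` or from `g_b`. The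
first puts `p_a` on two of the disjoint paths; the second makes `g_b` an ancestor of `q` (as
`c` is visible from `g_b`), hence of `p_a`, and then the arc `g_b p_b` is a shortcut.
-/

theorem Set.eq_of_mem_of_ncard_eq_one {α : Type*} {s : Set α} {x y : α} (h : s.ncard = 1)
    (hx : x ∈ s) (hy : y ∈ s) : x = y := by
  obtain ⟨a, rfl⟩ := Set.ncard_eq_one.1 h
  rw [Set.mem_singleton_iff] at hx hy
  rw [hx, hy]

theorem Set.eq_or_eq_of_ncard_eq_two {α : Type*} {s : Set α} {x y z : α} (h : s.ncard = 2)
    (hx : x ∈ s) (hy : y ∈ s) (hxy : x ≠ y) (hz : z ∈ s) : z = x ∨ z = y := by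
  obtain ⟨a, b, -, rfl⟩ := Set.ncard_eq_two.1 h
  simp only [Set.mem_insert_iff, Set.mem_singleton_iff] at hx hy hz
  grind

namespace Network

variable {X : Type} {N : Network X} {l l₁ l₂ : List N.V} {u v w : N.V}

namespace IsPathFromTo

theorem source_mem (h : N.IsPathFromTo l u v) : u ∈ l := List.mem_of_mem_head? h.2.1

theorem target_mem (h : N.IsPathFromTo l u v) : v ∈ l := List.mem_of_mem_getLast? h.2.2

theorem source_desc_of_mem (h : N.IsPathFromTo l u v) (hw : w ∈ l) : N.Desc u w := by
  obtain ⟨hc, hh, -⟩ := h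
  obtain ⟨t, rfl⟩ := List.head?_eq_some_iff.1 hh
  exact List.IsChain.induction (N.Desc u) _ hc (fun _ _ hxy hx => hx.tail hxy)
    (fun _ => Relation.ReflTransGen.refl) w hw

theorem desc (h : N.IsPathFromTo l u v) : N.Desc u v := h.source_desc_of_mem h.target_mem

theorem split (h : N.IsPathFromTo l u v) (hw : w ∈ l) :
    ∃ l₁ l₂, N.IsPathFromTo l₁ u w ∧ N.IsPathFromTo l₂ w v ∧ l₁ ⊆ l ∧ l₂ ⊆ l := by
  obtain ⟨hc, hh, hl⟩ := h
  obtain ⟨s, t, rfl⟩ := List.append_of_mem hw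
  obtain ⟨hc₁, hc₂⟩ := List.isChain_split.1 hc
  refine ⟨s ++ [w], w :: t, ⟨hc₁, ?_, by simp⟩, ⟨hc₂, rfl, ?_⟩, ?_, ?_⟩
  · simpa using hh
  · simpa using hl
  · exact List.IsPrefix.subset ⟨t, by simp⟩
  · exact List.subset_append_right _ _

theorem desc_target_of_mem (h : N.IsPathFromTo l u v) (hw : w ∈ l) : N.Desc w v :=
  let ⟨_, _, _, h₂, _⟩ := h.split hw
  h₂.desc

theorem append (h₁ : N.IsPathFromTo l₁ u v) (h₂ : N.IsPathFromTo l₂ v w) :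
    ∃ l, N.IsPathFromTo l u w ∧ ∀ z ∈ l, z ∈ l₁ ∨ z ∈ l₂ := by
  obtain ⟨t, rfl⟩ := List.head?_eq_some_iff.1 h₂.2.1
  refine ⟨l₁ ++ t, ⟨?_, ?_, ?_⟩, ?_⟩
  · refine h₁.1.append h₂.1.tail fun x hx y hy => ?_
    rw [Option.mem_def, h₁.2.2, Option.some_inj] at hx
    exact hx ▸ h₂.1.rel_head? hy
  · simp [h₁.2.1]
  · cases t with
    | nil =>
      obtain rfl : v = w := by simpa using h₂.2.2
      simpa using h₁.2.2
    | cons y t => simpa using h₂.2.2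
  · exact fun z hz => (List.mem_append.1 hz).imp_right (List.mem_cons_of_mem _)

theorem cons (h : N.IsPathFromTo l v w) (huv : N.arc u v) : N.IsPathFromTo (u :: l) u w := by
  obtain ⟨t, rfl⟩ := List.head?_eq_some_iff.1 h.2.1
  exact ⟨h.1.cons_cons huv, rfl, by simpa using h.2.2⟩

theorem exists_arc_of_mem (h : N.IsPathFromTo l u v) (hw : w ∈ l) (hwu : w ≠ u) :
    ∃ w' ∈ l, N.arc w' w := by
  obtain ⟨s, t, rfl⟩ := List.append_of_mem hw
  have hs : s ≠ [] := by
    rintro rfl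
    exact hwu (by simpa using h.2.1)
  exact ⟨s.getLast hs, List.mem_append_left _ (List.getLast_mem hs),
    (List.isChain_split.1 h.1).1.rel_getLast_head_of_append hs (List.cons_ne_nil _ _)⟩

theorem exists_suffix_from_last (P : N.V → Prop) (h : N.IsPathFromTo l u v)
    (hP : ∃ z ∈ l, P z) :
    ∃ w l', P w ∧ N.IsPathFromTo l' w v ∧ l' ⊆ l ∧ ∀ z ∈ l', P z → z = w := by
  induction l generalizing u with
  | nil => simp at hP
  | cons y t ih =>
    obtain rfl : y = u := by simpa using h.2.1
    by_cases ht : ∃ z ∈ t, P z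
    · obtain ⟨y', t', rfl⟩ := List.exists_cons_of_ne_nil (List.ne_nil_of_mem ht.choose_spec.1)
      have ht' : N.IsPathFromTo (y' :: t') y' v := ⟨h.1.tail, rfl, by simpa using h.2.2⟩
      obtain ⟨w, l', hw, hl', hsub, hlast⟩ := ih ht' ht
      exact ⟨w, l', hw, hl', fun z hz => List.mem_cons_of_mem _ (hsub hz), hlast⟩
    · simp only [not_exists, not_and] at ht
      have hy : P y := by
        obtain ⟨z, hz, hPz⟩ := hP
        rcases List.mem_cons.1 hz with rfl | hz
        · exact hPz
        · exact absurd hPz (ht z hz)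
      refine ⟨y, y :: t, hy, h, List.Subset.refl _, fun z hz hPz => ?_⟩
      rcases List.mem_cons.1 hz with rfl | hz
      · rfl
      · exact absurd hPz (ht z hz)

end IsPathFromTo

theorem isPathFromTo_pair (h : N.arc u v) : N.IsPathFromTo [u, v] u v :=
  ⟨List.isChain_pair.2 h, rfl, rfl⟩

theorem exists_path_of_desc (h : N.Desc u v) : ∃ l, N.IsPathFromTo l u v := by
  obtain ⟨l, hc, hl⟩ := List.exists_isChain_cons_of_relationReflTransGen h
  exact ⟨u :: l, hc, rfl, by rw [List.getLast?_eq_some_getLast (List.cons_ne_nil _ _), hl]⟩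

theorem mem_or_mem_of_mem_visSet {c : X} (hc : c ∈ N.visSet u)
    (h₁ : N.IsPathFromTo l₁ N.root v) (h₂ : N.IsPathFromTo l₂ v (N.leaf c)) : u ∈ l₁ ∨ u ∈ l₂ :=
  let ⟨_, hl, hmem⟩ := h₁.append h₂
  hmem u (hc _ hl)

theorem Acyclic.not_desc_of_arc (hac : N.Acyclic) (h : N.arc u v) : ¬ N.Desc v u :=
  fun hd => hac u (Relation.TransGen.head' h hd)

theorem Acyclic.eq_of_desc_of_desc (hac : N.Acyclic) (h₁ : N.Desc u v) (h₂ : N.Desc v u) :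
    u = v := by
  rcases h₁.cases_head with rfl | ⟨w, huw, hwv⟩
  · rfl
  · exact absurd (hwv.trans h₂) (hac.not_desc_of_arc huw)

theorem Acyclic.not_desc_of_not_hasShortcut (hac : N.Acyclic) (hs : ¬ N.HasShortcut)
    (hv : N.IsRetic v) (hu : N.arc u v) (hw : N.arc w v) (huw : u ≠ w) : ¬ N.Desc u w := by
  intro hd
  rcases hd.cases_head with rfl | ⟨y, huy, hyw⟩
  · exact huw rfl
  refine hs ⟨u, v, hu, hv, y, huy, ?_, hyw.tail hw⟩
  rintro rfl
  exact hac.not_desc_of_arc hw hyw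

theorem IsLeafVertex.not_arc [Finite N.V] (h : N.IsLeafVertex v) : ¬ N.arc v w := by
  intro hvw
  have hw : w ∈ N.children v := hvw
  rwa [(Set.ncard_eq_zero (Set.toFinite _)).1 h.2] at hw

theorem IsLeafVertex.eq_of_desc [Finite N.V] (h : N.IsLeafVertex v) (hd : N.Desc v w) :
    w = v := by
  rcases hd.cases_head with rfl | ⟨_, hvw, _⟩
  · rfl
  · exact absurd hvw h.not_arc

theorem Wf.root_desc (hwf : N.Wf) (v : N.V) : N.Desc N.root v := by
  obtain ⟨_, hac, -, -, -, hleaf, hcls⟩ := hwf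
  have : Std.Irrefl (Relation.TransGen N.arc) := ⟨hac⟩
  have hwfd : WellFounded N.arc :=
    Subrelation.wf Relation.TransGen.single (Finite.wellFounded_of_trans_of_irrefl _)
  refine hwfd.induction v fun v ih => ?_
  by_cases hv : v = N.root
  · exact hv ▸ .refl
  obtain ⟨u, hu⟩ : (N.parents v).Nonempty := Set.nonempty_of_ncard_ne_zero <| by
    rcases hcls v with hr | ⟨y, rfl⟩ | ht | hr
    · exact absurd hr hv
    · simp [(hleaf y).1]
    · simp [ht.1]
    · simp [hr.1]
  exact (ih u hu).tail hu

theorem Wf.desc_of_mem_visSet (hwf : N.Wf) {c : X} (hc : c ∈ N.visSet u) :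
    N.Desc u (N.leaf c) :=
  let ⟨_, hl⟩ := exists_path_of_desc (hwf.root_desc (N.leaf c))
  hl.desc_target_of_mem (hc _ hl)

theorem Wf.eq_of_desc_leaf (hwf : N.Wf) {b y : X} (hv : (N.children v).ncard = 1)
    (hb : N.arc v (N.leaf b)) (h : N.Desc v (N.leaf y)) : y = b := by
  obtain ⟨_, -, -, -, hinj, hleaf, -⟩ := hwf
  rcases h.cases_head with rfl | ⟨w, hvw, hw⟩
  · exact absurd hb (hleaf y).not_arc
  · obtain rfl : w = N.leaf b := Set.eq_of_mem_of_ncard_eq_one hv hvw hb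
    exact hinj ((hleaf b).eq_of_desc hw)

theorem Wf.not_mem_visSet_of_retic_parent (hwf : N.Wf) (hs : ¬ N.HasShortcut) {pa pb gb : N.V}
    {b : X} (hretic : N.IsRetic pb) (hpapb : N.arc pa pb) (hgbpb : N.arc gb pb)
    (hgbpa : gb ≠ pa) (hpb : N.arc pb (N.leaf b)) : b ∉ N.visSet gb := by
  intro hb
  obtain ⟨l, hl⟩ := exists_path_of_desc (hwf.root_desc pa)
  have hpb_b := isPathFromTo_pair hpb
  rcases mem_or_mem_of_mem_visSet hb hl (hpb_b.cons hpapb) with hgb | hgb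
  · exact hwf.2.1.not_desc_of_not_hasShortcut hs hretic hgbpb hpapb hgbpa
      (hl.desc_target_of_mem hgb)
  · rcases List.mem_cons.1 hgb with rfl | hgb
    · exact hgbpa rfl
    · exact hwf.2.1.not_desc_of_arc hgbpb (hpb_b.source_desc_of_mem hgb)

theorem Wf.displays_of_mem_visSet (hwf : N.Wf) {pb gb : N.V} {b c x : X}
    (hpb : (N.children pb).ncard = 1) (hb : N.arc pb (N.leaf b)) (hgb : N.arc gb pb)
    (hc : c ∈ N.visSet gb) (hcb : c ≠ b) (hx : x ∉ N.visSet gb) (hxb : x ≠ b) :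
    N.Displays b c x := by
  have hac := hwf.2.1
  obtain ⟨L, hL, hgbL⟩ : ∃ L, N.IsPathFromTo L N.root (N.leaf x) ∧ gb ∉ L := by
    simpa [visSet] using hx
  obtain ⟨p, lz, hp, hlz, hlzL, hlast⟩ :=
    hL.exists_suffix_from_last (N.Desc · gb) ⟨N.root, hL.source_mem, hwf.root_desc gb⟩
  obtain ⟨l0, hl0⟩ := exists_path_of_desc hp
  obtain ⟨ly, hly⟩ := exists_path_of_desc (hwf.desc_of_mem_visSet hc)
  have hlx := (isPathFromTo_pair hb).cons hgb
  have hlx_desc : ∀ v ∈ [gb, pb, N.leaf b], v = gb ∨ N.Desc pb v := by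
    simp only [List.mem_cons, List.not_mem_nil, or_false]
    rintro v (rfl | rfl | rfl)
    exacts [Or.inl rfl, Or.inr .refl, Or.inr (.single hb)]
  have hpgb : p ≠ gb := fun h => hgbL (hlzL (h ▸ hlz.source_mem))
  refine ⟨hcb.symm, hxb.symm, fun h => hx (h ▸ hc), p, gb, l0, _, ly, lz, hpgb, hl0, hlx, hly,
    hlz, ?_, ?_, ?_⟩
  · intro v hvx hvy
    refine (hlx_desc v hvx).resolve_right fun hv => hcb ?_
    exact hwf.eq_of_desc_leaf hpb hb (hv.trans (hly.desc_target_of_mem hvy))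
  · intro v hv0 hv
    refine (hac.eq_of_desc_of_desc ?_ (hl0.desc_target_of_mem hv0)).symm
    exact hv.elim hlx.source_desc_of_mem hly.source_desc_of_mem
  · intro v hvz hv
    have hvL := hlzL hvz
    have hvgb : v ≠ gb := fun h => hgbL (h ▸ hvL)
    rcases hv with hv0 | hvx | hvy
    · exact hlast v hvz (hl0.desc_target_of_mem hv0)
    · refine absurd (hwf.eq_of_desc_leaf hpb hb ?_) hxb
      exact ((hlx_desc v hvx).resolve_left hvgb).trans (hlz.desc_target_of_mem hvz)
    · obtain ⟨l₁, _, hl₁, -, hl₁L, -⟩ := hL.split hvL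
      obtain ⟨_, l₂, -, hl₂, -, -⟩ := hly.split hvy
      rcases mem_or_mem_of_mem_visSet hc hl₁ hl₂ with h | h
      · exact absurd (hl₁L h) hgbL
      · exact absurd (hac.eq_of_desc_of_desc (hl₂.source_desc_of_mem h)
          (hly.source_desc_of_mem hvy)) hvgb

theorem Wf.not_displays_of_mem_visSet (hwf : N.Wf) (hs : ¬ N.HasShortcut) {pa pb gb : N.V}
    {a b c : X} (hpa : N.arc pa (N.leaf a)) (hpb : N.arc pb (N.leaf b)) (hretic : N.IsRetic pb)
    (hpapb : N.arc pa pb) (hgbpb : N.arc gb pb) (hgbpa : gb ≠ pa) (hc : c ∈ N.visSet gb) :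
    ¬ N.Displays a c b := by
  obtain ⟨_, hac, -, -, hinj, hleaf, -⟩ := id hwf
  rintro ⟨hca, -, hcb, p, q, l0, lx, ly, lz, hpq, hl0, hlx, hly, hlz, -, -, hlz_disj⟩
  have hpc : N.Desc p (N.leaf c) := hl0.desc.trans hly.desc
  have hpa_lx : pa ∈ lx := by
    have hqa : N.leaf a ≠ q := by
      rintro rfl
      exact hca (hinj ((hleaf a).eq_of_desc hly.desc)).symm
    obtain ⟨w, hw, hwa⟩ := hlx.exists_arc_of_mem hlx.target_mem hqa
    exact Set.eq_of_mem_of_ncard_eq_one (hleaf a).1 hwa hpa ▸ hw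
  have hqpa : N.Desc q pa := hlx.source_desc_of_mem hpa_lx
  have hpb_p : ¬ N.Desc pb p := fun h => hcb (hwf.eq_of_desc_leaf hretic.2 hpb (h.trans hpc))
  have hpb_lz : pb ∈ lz := by
    have hbp : N.leaf b ≠ p := by
      rintro rfl
      exact hpb_p (.single hpb)
    obtain ⟨w, hw, hwb⟩ := hlz.exists_arc_of_mem hlz.target_mem hbp
    exact Set.eq_of_mem_of_ncard_eq_one (hleaf b).1 hwb hpb ▸ hw
  have hpbp : pb ≠ p := fun h => hpb_p (h ▸ .refl)
  obtain ⟨w, hw, hwpb⟩ := hlz.exists_arc_of_mem hpb_lz hpbp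
  rcases Set.eq_or_eq_of_ncard_eq_two hretic.1 hpapb hgbpb hgbpa.symm hwpb with hwpa | hwgb
  · have hpap : pa = p := hlz_disj pa (hwpa ▸ hw) (Or.inr (Or.inl hpa_lx))
    exact hpq (hac.eq_of_desc_of_desc hl0.desc (hpap ▸ hqpa))
  · have hgb_lz : gb ∈ lz := hwgb ▸ hw
    refine hac.not_desc_of_not_hasShortcut hs hretic hgbpb hpapb hgbpa (.trans ?_ hqpa)
    obtain ⟨R, hR⟩ := exists_path_of_desc (hwf.root_desc q)
    rcases mem_or_mem_of_mem_visSet hc hR hly with h | h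
    · exact hR.desc_target_of_mem h
    · exact hlz_disj gb hgb_lz (Or.inr (Or.inr h)) ▸ hl0.desc

end Network

theorem vgb_property_ii_general {X : Type} (N : Network X)
    (h : N.IsBinaryPhylo) (hn : N.IsNormal) (a b : X)
    (pa pb gb : N.V)
    (hpa : N.arc pa (N.leaf a)) (hpb : N.arc pb (N.leaf b))
    (hretic : N.IsRetic pb) (hpapb : N.arc pa pb) (hgbpb : N.arc gb pb)
    (hgbpa : gb ≠ pa) :
    ∀ c ∈ N.visSet gb, ∀ x : X, x ∉ N.visSet gb → x ≠ b →
      N.Displays b c x ∧ ¬ N.Displays a c b := by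
  have hwf : N.Wf := h.resolve_right fun hdeg => hdeg.2.1 _ _ hpb
  intro c hc x hx hxb
  have hcb : c ≠ b := by
    rintro rfl
    exact hwf.not_mem_visSet_of_retic_parent hn.2 hretic hpapb hgbpb hgbpa hpb hc
  exact ⟨hwf.displays_of_mem_visSet hretic.2 hpb hgbpb hc hcb hx hxb,
    hwf.not_displays_of_mem_visSet hn.2 hpa hpb hretic hpapb hgbpb hgbpa hc⟩

/-- Lemma (ii): for a reticulated cherry `{a,b}` with reticulation leaf `b` in
a binary normal network `N`, with `g_b` the grandparent of `b` other than the
parent `p_a` of `a`: for all `c ∈ V_{g_b}` and `x ∈ X - (V_{g_b} ∪ {b})`, `N`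
displays `bc|x` and does not display `ac|b`. -/
theorem vgb_property_ii {X : Type} (N : Network X)
    (h : N.IsBinaryPhylo) (hn : N.IsNormal) (a b : X) (hab : a ≠ b)
    (pa pb gb : N.V)
    (hpa : N.arc pa (N.leaf a)) (hpb : N.arc pb (N.leaf b))
    (hretic : N.IsRetic pb) (hpapb : N.arc pa pb) (hgbpb : N.arc gb pb)
    (hgbpa : gb ≠ pa) :
    ∀ c ∈ N.visSet gb, ∀ x : X, x ∉ N.visSet gb → x ≠ b →
      N.Displays b c x ∧ ¬ N.Displays a c b :=
  vgb_property_ii_general N h hn a b pa pb gb hpa hpb hretic hpapb hgbpb hgbpa
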